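/- Let F : A → B be a pointed functor between pointed groupoids, K(F) its strong homotopy kernel with projection P : K(F) → A, and D : π₁(B) → π₀(K(F)) the connecting map. Then the six-term sequence π₁(K(F)) → π₁(A) → π₁(B) → π₀(K(F)) → π₀(A) → π₀(B), with maps π₁(P), π₁(F), D, π₀(P), π₀(F), is a complex: each composite of two consecutive maps is trivial, i.e. π₁(P) followed by π₁(F) is the trivial homomorphism, π₁(F) followed by D is constant at the basepoint of π₀(K(F)), D followed by π₀(P) is constant at the basepoint of π₀(A), and π₀(P) followed by π₀(F) is constant at the basepoint of π₀(B). -/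

import Mathlib

/-!
An automorphism `f` of `(a, β)` in `K(F)` satisfies `F f ≫ β = β`, so `F f = 𝟙` because `β` is
invertible. An automorphism `a` of `*_A` is itself an isomorphism `(*_A, F a) ≅ (*_A, 𝟙)` in
`K(F)`. The object `D g = (*_A, g)` lies over `*_A` by construction, and every object `(a, β)`
of `K(F)` has `F a ≅ *_B` through `β`.
-/

open CategoryTheory

universe w v₁ v₂ v₃ v₄ u₁ u₂ u₃ u₄

namespace Snail

variable {A : Type u₁} [Groupoid.{v₁} A] {B : Type u₂} [Groupoid.{v₂} B]

/-- The set of connected components (isomorphism classes of objects) of a groupoid. -/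
def Pi0 (A : Type u₁) [Groupoid.{v₁} A] : Type u₁ :=
  Quotient (CategoryTheory.isIsomorphicSetoid A)

/-- The connected component of an object. -/
def pi0 (a : A) : Pi0 A := Quotient.mk (CategoryTheory.isIsomorphicSetoid A) a

/-- The map induced on connected components by a functor; for pointed functors
between pointed groupoids this is the induced pointed map `π₀(F)`. -/
def pi0Map (F : A ⥤ B) : Pi0 A → Pi0 B :=
  Quotient.map F.obj fun _ _ h => Nonempty.map (fun i => F.mapIso i) h

/-- The group homomorphism `π₁(F) : Aut (*_A) →* Aut (*_B)` induced by a pointed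
functor `F` (with `F.obj pA = pB`). -/
def pi1Map (F : A ⥤ B) {pA : A} {pB : B} (h : F.obj pA = pB) : Aut pA →* Aut pB :=
  (Aut.autMulEquivOfIso (eqToIso h)).toMonoidHom.comp (F.mapAut pA)

/-- The strong homotopy kernel `K(F)` of a functor `F : A ⥤ B` with respect to the
basepoint `pB` of `B` : objects are pairs `(a, β : F a ⟶ pB)`. -/
structure HKer (F : A ⥤ B) (pB : B) : Type (max u₁ v₂) where
  pt : A
  arr : F.obj pt ⟶ pB

/-- Morphisms `(a, β) ⟶ (a', β')` in `K(F)` are morphisms `f : a ⟶ a'` of `A` with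
`F.map f ≫ β' = β`. -/
instance hkerGroupoid (F : A ⥤ B) (pB : B) : Groupoid (HKer F pB) where
  Hom x y := { f : x.pt ⟶ y.pt // F.map f ≫ y.arr = x.arr }
  id x := ⟨𝟙 x.pt, by simp⟩
  comp {x y z} f g := ⟨f.1 ≫ g.1, by rw [F.map_comp, Category.assoc, g.2, f.2]⟩
  id_comp f := Subtype.ext (Category.id_comp f.1)
  comp_id f := Subtype.ext (Category.comp_id f.1)
  assoc f g h := Subtype.ext (Category.assoc f.1 g.1 h.1)
  inv {x y} f := ⟨Groupoid.inv f.1, by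
    obtain ⟨g, h⟩ := f
    dsimp only
    rw [← h, ← Category.assoc, ← F.map_comp, Groupoid.inv_comp, F.map_id, Category.id_comp]⟩
  inv_comp f := Subtype.ext (Groupoid.inv_comp f.1)
  comp_inv f := Subtype.ext (Groupoid.comp_inv f.1)

/-- The projection functor `P : K(F) ⥤ A`, `(a, β) ↦ a`, `f ↦ f`. -/
def hkerProj (F : A ⥤ B) (pB : B) : HKer F pB ⥤ A where
  obj x := x.pt
  map f := f.1
  map_id _ := rfl
  map_comp _ _ := rfl

/-- The connecting map `D : π₁(B) → π₀(K(F))`, sending `g ∈ Aut (*_B)` to the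
connected component of the object `(*_A, g)` of `K(F)`. -/
def connecting (F : A ⥤ B) {pA : A} {pB : B} (hF : F.obj pA = pB) :
    Aut pB → Pi0 (HKer F pB) :=
  fun g => pi0 (⟨pA, eqToHom hF ≫ g.hom⟩ : HKer F pB)

lemma pi0_eq_of_iso {x y : A} (i : x ≅ y) : pi0 x = pi0 y := Quotient.sound ⟨i⟩

lemma pi1Map_hom (F : A ⥤ B) {pA : A} {pB : B} (h : F.obj pA = pB) (a : Aut pA) :
    (pi1Map F h a).hom = eqToHom h.symm ≫ F.map a.hom ≫ eqToHom h :=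
  rfl

lemma pi1Map_rfl_hom (F : A ⥤ B) {pA : A} (a : Aut pA) :
    (pi1Map F (rfl : F.obj pA = F.obj pA) a).hom = F.map a.hom := by
  simp [pi1Map_hom]

lemma pi1Map_eq_one_of_map_eq_id (F : A ⥤ B) {pA : A} {pB : B} (h : F.obj pA = pB)
    {a : Aut pA} (ha : F.map a.hom = 𝟙 _) : pi1Map F h a = 1 := by
  ext
  simp only [pi1Map_hom, ha, Category.id_comp, eqToHom_trans, eqToHom_refl]
  rfl

namespace HKer

variable {F : A ⥤ B} {pB : B}

def isoMk {x y : HKer F pB} (f : x.pt ⟶ y.pt) (hf : F.map f ≫ y.arr = x.arr) : x ≅ y :=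
  (Groupoid.isoEquivHom x y).symm ⟨f, hf⟩

lemma map_aut_hom_eq_id {x : HKer F pB} (k : Aut x) : F.map k.hom.1 = 𝟙 (F.obj x.pt) :=
  (cancel_mono x.arr).1 (by simpa using k.hom.2)

end HKer

lemma pi1Map_comp_pi1Map_hkerProj (F : A ⥤ B) {pA : A} {pB : B} (hF : F.obj pA = pB)
    (k : Aut (⟨pA, eqToHom hF⟩ : HKer F pB)) :
    pi1Map F hF (pi1Map (hkerProj F pB) rfl k) = 1 :=
  pi1Map_eq_one_of_map_eq_id F hF <|
    (congrArg F.map (pi1Map_rfl_hom (hkerProj F pB) k)).trans (HKer.map_aut_hom_eq_id k)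

lemma connecting_pi1Map (F : A ⥤ B) {pA : A} {pB : B} (hF : F.obj pA = pB) (a : Aut pA) :
    connecting F hF (pi1Map F hF a) = pi0 (⟨pA, eqToHom hF⟩ : HKer F pB) :=
  pi0_eq_of_iso (HKer.isoMk a.hom (by simp [pi1Map_hom]))

lemma pi0Map_hkerProj_connecting (F : A ⥤ B) {pA : A} {pB : B} (hF : F.obj pA = pB)
    (b : Aut pB) : pi0Map (hkerProj F pB) (connecting F hF b) = pi0 pA := rfl

lemma pi0Map_pi0Map_hkerProj (F : A ⥤ B) (pB : B) (x : Pi0 (HKer F pB)) :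
    pi0Map F (pi0Map (hkerProj F pB) x) = pi0 pB :=
  Quotient.inductionOn x fun y => pi0_eq_of_iso ((Groupoid.isoEquivHom _ _).symm y.arr)

/-- The six-term snail sequence of a pointed functor between pointed groupoids is a
complex: every composite of two consecutive maps is trivial. -/
theorem snail_sequence_is_complex {A : Type u₁} [Groupoid.{v₁} A] {B : Type u₂}
    [Groupoid.{v₂} B] (F : A ⥤ B) (pA : A) (pB : B) (hF : F.obj pA = pB) :
    -- π₁(P) followed by π₁(F) is the trivial homomorphism
    (∀ k : Aut (⟨pA, eqToHom hF⟩ : HKer F pB),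
      pi1Map F hF (pi1Map (hkerProj F pB) rfl k) = 1) ∧
    -- π₁(F) followed by D is constant at the basepoint of π₀(K(F))
    (∀ a : Aut pA,
      connecting F hF (pi1Map F hF a) = pi0 (⟨pA, eqToHom hF⟩ : HKer F pB)) ∧
    -- D followed by π₀(P) is constant at the basepoint of π₀(A)
    (∀ b : Aut pB, pi0Map (hkerProj F pB) (connecting F hF b) = pi0 pA) ∧
    -- π₀(P) followed by π₀(F) is constant at the basepoint of π₀(B)
    (∀ x : Pi0 (HKer F pB), pi0Map F (pi0Map (hkerProj F pB) x) = pi0 pB) := by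
  exact ⟨pi1Map_comp_pi1Map_hkerProj F hF, connecting_pi1Map F hF,
    pi0Map_hkerProj_connecting F hF, pi0Map_pi0Map_hkerProj F pB⟩

end Snail
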